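/- Let F be a Muller condition over a finite alphabet Σ and let A be a deterministic parity automaton recognising L_F in which every state is reachable from the initial state. Then for every nonempty C ⊆ Σ and every C-SCC S of A, the maximal priority occurring on the edges of S is even if and only if C ∈ F. -/

import Mathlib

/-- The set of letters occurring infinitely often in the infinite word `w`. -/
def InfOcc {α : Type} (w : ℕ → α) : Set α :=
  {a | ∀ n, ∃ m, n ≤ m ∧ w m = a}

/-- A deterministic transition-based automaton over input alphabet `σ`
with output alphabet `Γ` and set of states `Q`. -/
structure DetAut (σ Γ Q : Type) where
  init : Q
  δ : Q → σ → Q × Γ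

namespace DetAut

variable {σ Γ Q : Type}

/-- The sequence of states of the run of `A` over `w`. -/
def run (A : DetAut σ Γ Q) (w : ℕ → σ) : ℕ → Q
  | 0 => A.init
  | n + 1 => (A.δ (run A w n) (w n)).1

/-- The output word produced by `A` reading `w`. -/
def output (A : DetAut σ Γ Q) (w : ℕ → σ) (n : ℕ) : Γ :=
  (A.δ (A.run w n) (w n)).2

end DetAut

/-- `u` satisfies the Rabin condition given by the pairs in `R`. -/
def RabinAccept {Γ : Type} (R : List (Set Γ × Set Γ)) (u : ℕ → Γ) : Prop :=
  ∃ p ∈ R, (InfOcc u ∩ p.1).Nonempty ∧ InfOcc u ∩ p.2 = ∅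

/-- `u` satisfies the Streett condition given by the pairs in `R`. -/
def StreettAccept {Γ : Type} (R : List (Set Γ × Set Γ)) (u : ℕ → Γ) : Prop :=
  ∀ p ∈ R, (InfOcc u ∩ p.1).Nonempty → (InfOcc u ∩ p.2).Nonempty

/-- The language accepted by the automaton `A` with Rabin condition `R`. -/
def RabinLang {σ Γ Q : Type} (A : DetAut σ Γ Q) (R : List (Set Γ × Set Γ)) :
    Set (ℕ → σ) :=
  {w | RabinAccept R (A.output w)}

/-- The Muller language associated to the Muller condition `F`. -/
def LF {Γ : Type} (F : Set (Set Γ)) : Set (ℕ → Γ) :=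
  {w | InfOcc w ∈ F}

namespace DetAut

variable {σ Γ Q : Type}

/-- The target state of the edge `e = (q, a)` of the transition graph of `A`. -/
def next (A : DetAut σ Γ Q) (e : Q × σ) : Q := (A.δ e.1 e.2).1

/-- The output colour of the edge `e = (q, a)` of the transition graph of `A`. -/
def ecol (A : DetAut σ Γ Q) (e : Q × σ) : Γ := (A.δ e.1 e.2).2

/-- `ℓ` is a cycle of `A`: some closed path in the transition graph of `A`
traverses exactly the edges of `ℓ`. -/
def IsCycle (A : DetAut σ Γ Q) (ℓ : Set (Q × σ)) : Prop :=
  ∃ (e : Q × σ) (l : List (Q × σ)),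
    List.Chain (fun e₁ e₂ => A.next e₁ = e₂.1) e l ∧
    A.next ((e :: l).getLast (List.cons_ne_nil e l)) = e.1 ∧
    {x | x ∈ e :: l} = ℓ

/-- The set of states incident to the edges of `ℓ`. -/
def statesOf (A : DetAut σ Γ Q) (ℓ : Set (Q × σ)) : Set Q :=
  {q | ∃ e ∈ ℓ, e.1 = q ∨ A.next e = q}

/-- The set of output colours appearing on the edges of `ℓ`. -/
def cycCol (A : DetAut σ Γ Q) (ℓ : Set (Q × σ)) : Set Γ :=
  A.ecol '' ℓ

/-- The language accepted by `A` with the Muller condition `F`. -/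
def MullerLang (A : DetAut σ Γ Q) (F : Set (Set Γ)) : Set (ℕ → σ) :=
  {w | InfOcc (A.output w) ∈ F}

/-- A Rabin condition can be defined on top of the Muller automaton `(A, F)`:
there is a Rabin automaton with the same states, initial state and transitions
as `A`, except for the output colours of the transitions, accepting the same
language. -/
def RabinOnTop (A : DetAut σ Γ Q) (F : Set (Set Γ)) : Prop :=
  ∃ (Γ' : Type) (out' : Q → σ → Γ') (R : List (Set Γ' × Set Γ')),
    RabinLang (DetAut.mk A.init (fun q a => ((A.δ q a).1, out' q a))) R
      = A.MullerLang F

end DetAut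

namespace DetAut

variable {σ Γ Q : Type}

/-- The set of input letters of the edges of the `A`-subgraph `S`. -/
def lettersOf (A : DetAut σ Γ Q) (S : Set (Q × σ)) : Set σ :=
  {a | ∃ q, (q, a) ∈ S}

/-- The `A`-subgraph `S` is complete: every vertex of `S` has, for every
letter `a ∈ Letters(S)`, an outgoing edge in `S` reading `a`. -/
def Complete (A : DetAut σ Γ Q) (S : Set (Q × σ)) : Prop :=
  ∀ q ∈ A.statesOf S, ∀ a ∈ A.lettersOf S, (q, a) ∈ S

/-- One step along an edge of `S`. -/
def sgStep (A : DetAut σ Γ Q) (S : Set (Q × σ)) (q q' : Q) : Prop :=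
  ∃ a, (q, a) ∈ S ∧ A.next (q, a) = q'

/-- The `A`-subgraph `S` is strongly connected: for every pair of its vertices
there is a path in `S` from one to the other. -/
def StronglyConn (A : DetAut σ Γ Q) (S : Set (Q × σ)) : Prop :=
  ∀ q ∈ A.statesOf S, ∀ q' ∈ A.statesOf S,
    Relation.ReflTransGen (A.sgStep S) q q'

/-- `S` is a `C`-SCC of `A`: a strongly connected and complete subgraph of the
transition graph of `A` whose set of input letters is exactly `C`. -/
def IsCSCC (A : DetAut σ Γ Q) (C : Set σ) (S : Set (Q × σ)) : Prop :=
  A.StronglyConn S ∧ A.Complete S ∧ A.lettersOf S = C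

end DetAut

/-!
Read a word that first leads from the initial state to a state `q` of `S` and then repeats
forever a loop at `q` which stays inside `S` and traverses every edge of `S` (such a loop exists
because `S` is finite and strongly connected). The edges of its run visited infinitely often are
exactly those of `S`, so the letters read infinitely often form `C` and the priorities seen
infinitely often are those of `S`; the recognition hypothesis then says precisely that the
maximum of the latter is even iff `C ∈ F`.
-/

open Function Set

section InfOcc

variable {α : Type}

lemma infOcc_comp_add_left (u : ℕ → α) (p : ℕ) : InfOcc (fun n => u (p + n)) = InfOcc u := by
  ext a
  constructor
  · intro h n
    obtain ⟨m, hm, rfl⟩ := h n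
    exact ⟨p + m, by omega, rfl⟩
  · intro h n
    obtain ⟨m, hm, rfl⟩ := h (p + n)
    exact ⟨m - p, by omega, by simp only [Nat.add_sub_cancel' (show p ≤ m by omega)]⟩

lemma Function.Periodic.infOcc_eq_range {u : ℕ → α} {m : ℕ} (hu : Periodic u m) (hm : 0 < m) :
    InfOcc u = range u := by
  refine Subset.antisymm (fun a h => ?_) ?_
  · obtain ⟨k, -, rfl⟩ := h 0
    exact mem_range_self k
  · rintro _ ⟨k, rfl⟩ n
    exact ⟨k + n * m, by nlinarith, (hu.nat_mul n) k⟩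

lemma Function.Periodic.range_eq_image_Iio {u : ℕ → α} {m : ℕ} (hu : Periodic u m)
    (hm : 0 < m) : range u = u '' Iio m := by
  refine Subset.antisymm ?_ (image_subset_range u _)
  rintro _ ⟨k, rfl⟩
  exact ⟨k % m, Nat.mod_lt k hm, hu.map_mod_nat k⟩

lemma infOcc_comp_of_periodic {β : Type} {u : ℕ → α} {p m : ℕ}
    (hu : Periodic (fun n => u (p + n)) m) (hm : 0 < m) (f : α → β) :
    InfOcc (f ∘ u) = f '' range (fun n => u (p + n)) := by
  rw [← infOcc_comp_add_left, ← range_comp]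
  exact (hu.comp f).infOcc_eq_range hm

end InfOcc

section Words

variable {σ : Type}

def ReadsAt (w : ℕ → σ) (n : ℕ) (l : List σ) : Prop :=
  ∀ i (h : i < l.length), w (n + i) = l[i]

lemma ReadsAt.head_tail {w : ℕ → σ} {n : ℕ} {a : σ} {l : List σ} (h : ReadsAt w n (a :: l)) :
    w n = a ∧ ReadsAt w (n + 1) l :=
  ⟨h 0 (by simp), fun i hi => by
    rw [show n + 1 + i = n + (i + 1) by omega]
    exact h (i + 1) (by simpa using hi)⟩

lemma exists_word_lasso (pre cyc : List σ) (hcyc : cyc ≠ []) :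
    ∃ w : ℕ → σ, ReadsAt w 0 pre ∧ ReadsAt w pre.length cyc ∧
      Periodic (fun n => w (pre.length + n)) cyc.length := by
  have hm : 0 < cyc.length := List.length_pos_iff.mpr hcyc
  refine ⟨fun n => if h : n < pre.length then pre[n]
      else cyc[(n - pre.length) % cyc.length]'(Nat.mod_lt _ hm),
    fun i h => ?_, fun i h => ?_, fun n => ?_⟩
  · simp [h]
  · simp [Nat.mod_eq_of_lt h]
  · simp only [show ¬pre.length + (n + cyc.length) < pre.length by omega,
      show ¬pre.length + n < pre.length by omega, dite_false, Nat.add_sub_cancel_left,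
      Nat.add_mod_right]

end Words

namespace DetAut

variable {σ Γ Q : Type}

def edgesFrom (A : DetAut σ Γ Q) : Q → List σ → List (Q × σ)
  | _, [] => []
  | q, a :: l => (q, a) :: A.edgesFrom (A.next (q, a)) l

variable (A : DetAut σ Γ Q)

def evalFrom (q : Q) (l : List σ) : Q :=
  l.foldl (fun q a => A.next (q, a)) q

def runEdges (w : ℕ → σ) (n : ℕ) : Q × σ :=
  (A.run w n, w n)

def IsLoopIn (S : Set (Q × σ)) (q : Q) (l : List σ) : Prop :=
  A.evalFrom q l = q ∧ ∀ e ∈ A.edgesFrom q l, e ∈ S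

@[simp]
lemma evalFrom_nil (q : Q) : A.evalFrom q [] = q := rfl

@[simp]
lemma evalFrom_cons (q : Q) (a : σ) (l : List σ) :
    A.evalFrom q (a :: l) = A.evalFrom (A.next (q, a)) l := rfl

lemma evalFrom_append (q : Q) (l₁ l₂ : List σ) :
    A.evalFrom q (l₁ ++ l₂) = A.evalFrom (A.evalFrom q l₁) l₂ :=
  List.foldl_append

@[simp]
lemma edgesFrom_nil (q : Q) : A.edgesFrom q [] = [] := rfl

@[simp]
lemma edgesFrom_cons (q : Q) (a : σ) (l : List σ) :
    A.edgesFrom q (a :: l) = (q, a) :: A.edgesFrom (A.next (q, a)) l := rfl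

lemma edgesFrom_append (q : Q) (l₁ l₂ : List σ) :
    A.edgesFrom q (l₁ ++ l₂) = A.edgesFrom q l₁ ++ A.edgesFrom (A.evalFrom q l₁) l₂ := by
  induction l₁ generalizing q <;> simp [*]

lemma run_succ (w : ℕ → σ) (n : ℕ) : A.run w (n + 1) = A.next (A.run w n, w n) := rfl

lemma lettersOf_eq_image (S : Set (Q × σ)) : A.lettersOf S = Prod.snd '' S := by
  ext a
  simp [lettersOf]

variable {A}

lemma exists_path_of_reflTransGen {S : Set (Q × σ)} {q q' : Q}
    (h : Relation.ReflTransGen (A.sgStep S) q q') :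
    ∃ l, A.evalFrom q l = q' ∧ ∀ e ∈ A.edgesFrom q l, e ∈ S := by
  induction h with
  | refl => exact ⟨[], rfl, by simp⟩
  | tail _ hstep ih =>
    obtain ⟨l, rfl, hl⟩ := ih
    obtain ⟨a, ha, rfl⟩ := hstep
    refine ⟨l ++ [a], A.evalFrom_append .., fun e he => ?_⟩
    rw [edgesFrom_append, List.mem_append] at he
    rcases he with he | he
    · exact hl e he
    · simp_all

lemma exists_evalFrom_eq_of_reflTransGen {q q' : Q}
    (h : Relation.ReflTransGen (fun p p' => ∃ a, (A.δ p a).1 = p') q q') :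
    ∃ l, A.evalFrom q l = q' :=
  have hstep : Relation.ReflTransGen (A.sgStep univ) q q' :=
    Relation.ReflTransGen.mono (fun _ _ ⟨a, ha⟩ => ⟨a, trivial, ha⟩) _ _ h
  (exists_path_of_reflTransGen hstep).imp fun _ h => h.1

lemma mem_edgesFrom_append_of_evalFrom_eq {q : Q} {l₁ : List σ} (h : A.evalFrom q l₁ = q)
    (l₂ : List σ) (e : Q × σ) :
    e ∈ A.edgesFrom q (l₁ ++ l₂) ↔ e ∈ A.edgesFrom q l₁ ∨ e ∈ A.edgesFrom q l₂ := by
  rw [edgesFrom_append, h, List.mem_append]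

lemma IsLoopIn.append {S : Set (Q × σ)} {q : Q} {l₁ l₂ : List σ} (h₁ : A.IsLoopIn S q l₁)
    (h₂ : A.IsLoopIn S q l₂) : A.IsLoopIn S q (l₁ ++ l₂) := by
  refine ⟨by rw [evalFrom_append, h₁.1, h₂.1], fun e he => ?_⟩
  rcases (mem_edgesFrom_append_of_evalFrom_eq h₁.1 l₂ e).1 he with he | he
  exacts [h₁.2 e he, h₂.2 e he]

lemma exists_loop_mem {S : Set (Q × σ)} (hS : A.StronglyConn S) {q : Q} (hq : q ∈ A.statesOf S)
    {e : Q × σ} (he : e ∈ S) : ∃ l, A.IsLoopIn S q l ∧ e ∈ A.edgesFrom q l := by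
  obtain ⟨l₁, hl₁, hl₁S⟩ := exists_path_of_reflTransGen (hS q hq e.1 ⟨e, he, Or.inl rfl⟩)
  obtain ⟨l₂, hl₂, hl₂S⟩ :=
    exists_path_of_reflTransGen (hS (A.next e) ⟨e, he, Or.inr rfl⟩ q hq)
  have hedges : A.edgesFrom q (l₁ ++ e.2 :: l₂) =
      A.edgesFrom q l₁ ++ e :: A.edgesFrom (A.next e) l₂ := by
    rw [edgesFrom_append, hl₁, edgesFrom_cons]
  refine ⟨l₁ ++ e.2 :: l₂, ⟨by rw [evalFrom_append, hl₁, evalFrom_cons]; exact hl₂, fun x hx => ?_⟩,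
    by simp [hedges]⟩
  rw [hedges, List.mem_append, List.mem_cons] at hx
  rcases hx with hx | rfl | hx
  exacts [hl₁S x hx, he, hl₂S x hx]

lemma exists_loop_edgesFrom_eq {S : Set (Q × σ)} (hconn : A.StronglyConn S) (hfin : S.Finite)
    {q : Q} (hq : q ∈ A.statesOf S) :
    ∃ l, A.evalFrom q l = q ∧ {e | e ∈ A.edgesFrom q l} = S := by
  classical
  suffices h : ∀ T : Finset (Q × σ), ↑T ⊆ S →
      ∃ l, A.IsLoopIn S q l ∧ ↑T ⊆ {e | e ∈ A.edgesFrom q l} by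
    obtain ⟨l, hl, hcov⟩ := h hfin.toFinset (by simp)
    exact ⟨l, hl.1, Subset.antisymm hl.2 (by simpa using hcov)⟩
  intro T
  induction T using Finset.induction_on with
  | empty => exact fun _ => ⟨[], ⟨rfl, by simp⟩, by simp⟩
  | insert e T _ ih =>
    intro hT
    rw [Finset.coe_insert, insert_subset_iff] at hT
    obtain ⟨l₁, hl₁, hcov₁⟩ := ih hT.2
    obtain ⟨l₂, hl₂, he⟩ := exists_loop_mem hconn hq hT.1
    have hedges := mem_edgesFrom_append_of_evalFrom_eq hl₁.1 l₂
    refine ⟨l₁ ++ l₂, hl₁.append hl₂, ?_⟩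
    rw [Finset.coe_insert, insert_subset_iff]
    exact ⟨(hedges e).2 (Or.inr he), fun x hx => (hedges x).2 (Or.inl (hcov₁ hx))⟩

lemma run_add_length {w : ℕ → σ} {n : ℕ} {l : List σ} (hw : ReadsAt w n l) :
    A.run w (n + l.length) = A.evalFrom (A.run w n) l := by
  induction l generalizing n with
  | nil => rfl
  | cons a l ih =>
    obtain ⟨hw₀, hw⟩ := hw.head_tail
    rw [List.length_cons, show n + (l.length + 1) = n + 1 + l.length by omega, ih hw,
      evalFrom_cons, run_succ, hw₀]

lemma mem_edgesFrom_run {w : ℕ → σ} {n : ℕ} {l : List σ} (hw : ReadsAt w n l) (e : Q × σ) :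
    e ∈ A.edgesFrom (A.run w n) l ↔ ∃ i < l.length, A.runEdges w (n + i) = e := by
  induction l generalizing n with
  | nil => simp
  | cons a l ih =>
    obtain ⟨hw₀, hw⟩ := hw.head_tail
    rw [edgesFrom_cons, ← hw₀, ← run_succ, List.mem_cons, ih hw]
    constructor
    · rintro (rfl | ⟨i, hi, rfl⟩)
      · exact ⟨0, by simp, rfl⟩
      · exact ⟨i + 1, by simpa using hi, by rw [Nat.add_right_comm, Nat.add_assoc]⟩
    · rintro ⟨_ | i, hi, rfl⟩
      · exact Or.inl rfl
      · exact Or.inr ⟨i, by simpa using hi, by rw [Nat.add_right_comm, Nat.add_assoc]⟩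

lemma periodic_runEdges {w : ℕ → σ} {p m : ℕ} (hw : Periodic (fun n => w (p + n)) m)
    (hrun : A.run w (p + m) = A.run w p) : Periodic (fun n => A.runEdges w (p + n)) m := by
  have hstates : Periodic (fun n => A.run w (p + n)) m := by
    intro n
    induction n with
    | zero => simpa using hrun
    | succ n ih =>
      have hw' : w (p + (n + m)) = w (p + n) := hw n
      simp only at ih ⊢
      rw [show p + (n + 1 + m) = p + (n + m) + 1 by omega, show p + (n + 1) = p + n + 1 by omega,
        run_succ, run_succ, ih, hw']
  exact fun n => Prod.ext (hstates n) (hw n)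

lemma exists_word_infOcc_comp_runEdges {pre cyc : List σ} {q : Q}
    (hpre : A.evalFrom A.init pre = q) (hloop : A.evalFrom q cyc = q) (hcyc : cyc ≠ []) :
    ∃ w : ℕ → σ, ∀ {β : Type} (f : Q × σ → β),
      InfOcc (f ∘ A.runEdges w) = f '' {e | e ∈ A.edgesFrom q cyc} := by
  have hm : 0 < cyc.length := List.length_pos_iff.mpr hcyc
  obtain ⟨w, hwpre, hwcyc, hper⟩ := exists_word_lasso pre cyc hcyc
  have hq : A.run w pre.length = q := by
    simpa using (A.run_add_length hwpre).trans hpre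
  have hrun : A.run w (pre.length + cyc.length) = A.run w pre.length := by
    rw [run_add_length hwcyc, hq, hloop]
  have hedges := periodic_runEdges hper hrun
  have hrange : range (fun n => A.runEdges w (pre.length + n)) = {e | e ∈ A.edgesFrom q cyc} := by
    ext e
    rw [hedges.range_eq_image_Iio hm, mem_ofPred_eq, ← hq, mem_edgesFrom_run hwcyc]
    simp
  exact ⟨w, fun f => hrange ▸ infOcc_comp_of_periodic hedges hm f⟩

end DetAut

/-- Let `A` be a deterministic parity automaton recognising `L_F` in which
every state is reachable from the initial state. Then for every nonempty
`C ⊆ σ` and every `C`-SCC `S` of `A`, the maximal priority occurring on the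
edges of `S` is even iff `C ∈ F`. -/
theorem stmt9 {σ Q : Type} [Fintype σ] [Fintype Q]
    (F : Set (Set σ)) (A : DetAut σ ℕ Q)
    (hrec : {w : ℕ → σ | Even (sSup (InfOcc (A.output w)))} = LF F)
    (hreach : ∀ q : Q,
      Relation.ReflTransGen (fun p p' => ∃ a, (A.δ p a).1 = p') A.init q)
    (C : Set σ) (hC : C.Nonempty) (S : Set (Q × σ)) (hS : A.IsCSCC C S) :
    Even (sSup (A.ecol '' S)) ↔ C ∈ F := by
  obtain ⟨hconn, -, hletters⟩ := hS
  obtain ⟨a, ha⟩ := hC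
  obtain ⟨q, hqa⟩ : a ∈ A.lettersOf S := hletters.symm ▸ ha
  obtain ⟨cyc, hloop, hcov⟩ :=
    DetAut.exists_loop_edgesFrom_eq hconn S.toFinite ⟨_, hqa, Or.inl rfl⟩
  have hcyc : cyc ≠ [] := by
    rintro rfl
    simp [← hcov] at hqa
  obtain ⟨pre, hpre⟩ := DetAut.exists_evalFrom_eq_of_reflTransGen (hreach q)
  obtain ⟨w, hw⟩ := DetAut.exists_word_infOcc_comp_runEdges hpre hloop hcyc
  have hletters_w : InfOcc w = C := by
    rw [← hletters, DetAut.lettersOf_eq_image, ← hcov]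
    exact hw Prod.snd
  have hcolours : InfOcc (A.output w) = A.ecol '' S := hcov ▸ hw A.ecol
  simpa [LF, hletters_w, hcolours] using Set.ext_iff.mp hrec w
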